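/- Let d ≥ 1, K ≥ 1, let n ∈ ℝ^d with ‖n‖ = 1, let V ∈ ℝ, and for each k ∈ {1,…,K} let v_k ∈ ℝ^d, ρ_k ≠ 0, c_k ≠ 0, and let A_k be an arbitrary real (d+1)×(K−1) matrix. Let M be the square real matrix of size (K−1)+K(d+1) with the block structure: the top-left (K−1)×(K−1) block equals V·I_{K−1}; for each k, the block in block-row k and the first block-column equals A_k and the k-th diagonal block equals the phasic coefficient matrix B(v_k,ρ_k,c_k,n); all other blocks are zero. Assume the non-resonance condition: V ≠ v_k·n and V ≠ v_k·n ± c_k for every k. Then M is diagonalizable over ℝ, i.e., there exist an invertible real matrix S and a real diagonal matrix D with M = S·D·S⁻¹; equivalently, ℝ^{(K−1)+K(d+1)} admits a basis consisting of eigenvectors of M. -/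

import Mathlib

open scoped RealInnerProductSpace

/-- The phasic coefficient matrix `B(v,ρ,c,n)` of one component of the barotropic
Baer–Nunziato model in primitive variables, projected onto the direction `n`. -/
noncomputable def phasicB (d : ℕ) (v n : EuclideanSpace ℝ (Fin d)) (ρ c : ℝ) :
    Matrix (Fin d ⊕ Unit) (Fin d ⊕ Unit) ℝ :=
  Matrix.fromBlocks
    (⟪v, n⟫ • (1 : Matrix (Fin d) (Fin d) ℝ))
    (Matrix.of fun i _ => ρ⁻¹ * n i)
    (Matrix.of fun _ j => ρ * c ^ 2 * n j)
    (⟪v, n⟫ • (1 : Matrix Unit Unit ℝ))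

/-- The coefficient matrix `B_n` of the `K`-component barotropic Baer–Nunziato model
projected onto direction `n`. -/
noncomputable def bnMatrix (d K : ℕ) (n : EuclideanSpace ℝ (Fin d)) (V : ℝ)
    (v : Fin K → EuclideanSpace ℝ (Fin d)) (ρ c : Fin K → ℝ)
    (A : Fin K → Matrix (Fin d ⊕ Unit) (Fin (K - 1)) ℝ) :
    Matrix (Fin (K - 1) ⊕ ((Fin d ⊕ Unit) × Fin K))
      (Fin (K - 1) ⊕ ((Fin d ⊕ Unit) × Fin K)) ℝ :=
  Matrix.fromBlocks (V • (1 : Matrix (Fin (K - 1)) (Fin (K - 1)) ℝ)) 0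
    (Matrix.of fun p j => A p.2 p.1 j)
    (Matrix.blockDiagonal fun k => phasicB d (v k) n (ρ k) (c k))

/-!
With `u = v·n`, the matrix `B - u` of a phasic block is antidiagonal with off-diagonal blocks
`ρ⁻¹ n` and `ρ c² nᵀ`, whose product in the short order is the scalar `c² ‖n‖² = c²`. Hence
`(B - u)³ = c² (B - u)`, i.e. `B` is annihilated by `(X - u)(X - u - c)(X - u + c)`. The full
matrix is block lower-triangular with scalar top-left block `V`, so it is annihilated by `X - V`
times the product of all these cubics. As `c ≠ 0` and by non-resonance, this is a product of
distinct linear factors, and a matrix killed by such a polynomial is diagonalizable: the kernel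
of the product is the sum of the eigenspaces.
-/

open Polynomial Matrix

namespace Module.End

variable {K M : Type*} [Field K] [AddCommGroup M] [Module K M]

theorem ker_aeval_prod_X_sub_C (f : End K M) (T : Finset K) :
    LinearMap.ker (aeval f (∏ t ∈ T, (X - C t))) = ⨆ t ∈ T, f.eigenspace t := by
  classical
  induction T using Finset.induction_on with
  | empty => simp [LinearMap.ker_eq_bot']
  | insert a s ha ih =>
    have hcop : IsCoprime (X - C a) (∏ t ∈ s, (X - C t)) :=
      IsCoprime.prod_right fun b hb =>
        isCoprime_X_sub_C_of_isUnit_sub (sub_ne_zero.mpr (ne_of_mem_of_not_mem hb ha).symm).isUnit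
    rw [Finset.prod_insert ha, ← sup_ker_aeval_eq_ker_aeval_mul_of_coprime f hcop, ih,
      Finset.iSup_insert, eigenspace_def]
    simp [Algebra.algebraMap_eq_smul_one]

end Module.End

namespace Matrix

section Field

variable {K m : Type*} [Field K] [Fintype m] [DecidableEq m]

theorem exists_eq_mul_diagonal_mul_inv_of_basis (M : Matrix m m K) (b : Module.Basis m K (m → K))
    (D : m → K) (hb : ∀ i, M *ᵥ b i = D i • b i) :
    ∃ S : Matrix m m K, IsUnit S.det ∧ M = S * diagonal D * S⁻¹ := by
  let S := (Pi.basisFun K m).toMatrix b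
  have hS : IsUnit S.det :=
    letI := (Pi.basisFun K m).invertibleToMatrix b; isUnit_det_of_invertible S
  have hS_apply (x i : m) : S x i = b i x := by
    simp [S, Module.Basis.toMatrix_apply]
  have hMS : M * S = S * diagonal D := by
    ext x i
    have hcol : (M * S) x i = (M *ᵥ b i) x := by
      simp [mul_apply, mulVec, dotProduct, hS_apply]
    simp [hcol, hb, hS_apply, mul_comm]
  refine ⟨S, hS, ?_⟩
  rw [← hMS, mul_assoc, mul_nonsing_inv _ hS, mul_one]

theorem exists_eq_mul_diagonal_mul_inv_of_aeval_prod_X_sub_C_eq_zero (M : Matrix m m K)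
    (T : Finset K) (hM : aeval M (∏ t ∈ T, (X - C t)) = 0) :
    ∃ (S : Matrix m m K) (D : m → K), IsUnit S.det ∧ M = S * diagonal D * S⁻¹ := by
  classical
  set f : Module.End K (m → K) := toLin' M
  have hf : aeval f (∏ t ∈ T, (X - C t)) = 0 := by
    rw [show f = toLinAlgEquiv' M from rfl, aeval_algHom_apply, hM, map_zero]
  have htop : ⨆ μ, f.eigenspace μ = ⊤ := by
    have hker := f.ker_aeval_prod_X_sub_C T
    rw [hf, LinearMap.ker_zero] at hker
    exact top_unique (hker.le.trans (iSup₂_le fun t _ => le_iSup f.eigenspace t))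
  let hinternal := DirectSum.isInternal_submodule_of_iSupIndep_of_iSup_eq_top
    f.eigenspaces_iSupIndep htop
  let b := hinternal.collectedBasis fun μ => Module.finBasis K (f.eigenspace μ)
  let e := b.indexEquiv (Pi.basisFun K m)
  obtain ⟨S, hS, hMS⟩ := exists_eq_mul_diagonal_mul_inv_of_basis M (b.reindex e)
    (fun i => (e.symm i).1) fun i => by
      rw [Module.Basis.reindex_apply]
      exact Module.End.mem_eigenspace_iff.mp (hinternal.collectedBasis_mem _ _)
  exact ⟨S, _, hS, hMS⟩

end Field

section CommRing

variable {R m n o : Type*} [CommRing R] [Fintype m] [DecidableEq m] [Fintype n] [DecidableEq n]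
  [Fintype o] [DecidableEq o]

theorem aeval_blockDiagonal (B : o → Matrix m m R) (p : R[X]) :
    aeval (blockDiagonal B) p = blockDiagonal fun k => aeval (B k) p := by
  induction p using Polynomial.induction_on' with
  | add p q hp hq => simp only [map_add, hp, hq, ← blockDiagonal_add]; rfl
  | monomial k a =>
    simp only [aeval_monomial, Algebra.algebraMap_eq_smul_one, smul_mul_assoc, one_mul,
      ← blockDiagonal_pow, ← blockDiagonal_smul]
    rfl

theorem exists_aeval_fromBlocks_zero₁₂ (A : Matrix m m R) (Cm : Matrix n m R) (B : Matrix n n R)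
    (p : R[X]) : ∃ Y, aeval (fromBlocks A 0 Cm B) p = fromBlocks (aeval A p) 0 Y (aeval B p) := by
  induction p using Polynomial.induction_on with
  | C a => exact ⟨0, by simp [Algebra.algebraMap_eq_smul_one, ← fromBlocks_one, fromBlocks_smul]⟩
  | add p q hp hq =>
    obtain ⟨Y, hY⟩ := hp
    obtain ⟨Z, hZ⟩ := hq
    exact ⟨Y + Z, by simp [hY, hZ, fromBlocks_add]⟩
  | monomial k a h =>
    obtain ⟨Y, hY⟩ := h
    refine ⟨Y * A + aeval B (C a * X ^ k) * Cm, ?_⟩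
    simp only [pow_succ, ← mul_assoc, map_mul (aeval _) _ X, aeval_X, hY, fromBlocks_multiply]
    simp

theorem aeval_fromBlocks_zero₁₂_mul_eq_zero {A : Matrix m m R} (Cm : Matrix n m R)
    {B : Matrix n n R} {p q : R[X]} (hp : aeval A p = 0) (hq : aeval B q = 0) :
    aeval (fromBlocks A 0 Cm B) (p * q) = 0 := by
  obtain ⟨Y, hY⟩ := exists_aeval_fromBlocks_zero₁₂ A Cm B p
  obtain ⟨Z, hZ⟩ := exists_aeval_fromBlocks_zero₁₂ A Cm B q
  rw [mul_comm, map_mul, hY, hZ, hp, hq, fromBlocks_multiply]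
  simp

theorem fromBlocks_zero_zero_pow_three {a : Matrix n m R} {b : Matrix m n R} {s : R}
    (hab : a * b = s • 1) : fromBlocks 0 b a 0 ^ 3 = s • fromBlocks 0 b a 0 := by
  rw [pow_three, fromBlocks_multiply, fromBlocks_multiply]
  simp [← Matrix.mul_assoc, hab, fromBlocks_smul]

end CommRing

end Matrix

theorem phasicB_sub_smul_one (d : ℕ) (v n : EuclideanSpace ℝ (Fin d)) (ρ c : ℝ) :
    phasicB d v n ρ c - ⟪v, n⟫ • 1 =
      fromBlocks 0 (of fun i _ => ρ⁻¹ * n i) (of fun _ j => ρ * c ^ 2 * n j) 0 := by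
  ext (i | i) (j | j) <;> simp [phasicB, one_apply]

theorem phasicB_aeval_eq_zero (d : ℕ) (v n : EuclideanSpace ℝ (Fin d)) (ρ c : ℝ)
    (hn : ‖n‖ = 1) (hρ : ρ ≠ 0) (hc : c ≠ 0) :
    aeval (phasicB d v n ρ c) (∏ t ∈ {⟪v, n⟫, ⟪v, n⟫ + c, ⟪v, n⟫ - c}, (X - C t)) = 0 := by
  set u := ⟪v, n⟫
  have hprod : ∏ t ∈ {u, u + c, u - c}, (X - C t) = (X - C u) ^ 3 - C (c ^ 2) * (X - C u) := by
    have hu : u ∉ ({u + c, u - c} : Finset ℝ) := by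
      simp only [Finset.mem_insert, Finset.mem_singleton, not_or]
      constructor <;> intro h <;> apply hc <;> linarith
    have huc : u + c ∉ ({u - c} : Finset ℝ) := by
      rw [Finset.mem_singleton]; intro h; apply hc; linarith
    rw [Finset.prod_insert hu, Finset.prod_insert huc, Finset.prod_singleton]
    simp only [C_add, C_sub, C_pow]
    ring
  have hnorm : (of fun (_ : Unit) (j : Fin d) => ρ * c ^ 2 * n j) *
      (of fun i (_ : Unit) => ρ⁻¹ * n i) = c ^ 2 • 1 := by
    have hsum : ∑ j, n j * n j = 1 := by
      simpa [EuclideanSpace.norm_eq, Real.sqrt_eq_one, sq] using hn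
    ext
    simp only [mul_apply, of_apply, Matrix.smul_apply, one_apply_eq, smul_eq_mul, mul_one]
    calc ∑ j, ρ * c ^ 2 * n j * (ρ⁻¹ * n j) = c ^ 2 * ∑ j, n j * n j := by
          rw [Finset.mul_sum]; congr 1; ext j; field_simp
      _ = c ^ 2 := by rw [hsum, mul_one]
  rw [hprod, map_sub, map_mul, aeval_C, ← Algebra.smul_def, map_pow, map_sub, aeval_X, aeval_C,
    Algebra.algebraMap_eq_smul_one, phasicB_sub_smul_one, fromBlocks_zero_zero_pow_three hnorm,
    sub_self]

theorem bnMatrix_diagonalizable_general (d K : ℕ)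
    (n : EuclideanSpace ℝ (Fin d)) (hn : ‖n‖ = 1) (V : ℝ)
    (v : Fin K → EuclideanSpace ℝ (Fin d)) (ρ c : Fin K → ℝ)
    (hρ : ∀ k, ρ k ≠ 0) (hc : ∀ k, c k ≠ 0)
    (A : Fin K → Matrix (Fin d ⊕ Unit) (Fin (K - 1)) ℝ)
    (hres₀ : ∀ k, V ≠ ⟪v k, n⟫)
    (hresP : ∀ k, V ≠ ⟪v k, n⟫ + c k)
    (hresM : ∀ k, V ≠ ⟪v k, n⟫ - c k) :
    ∃ (S : Matrix (Fin (K - 1) ⊕ ((Fin d ⊕ Unit) × Fin K))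
          (Fin (K - 1) ⊕ ((Fin d ⊕ Unit) × Fin K)) ℝ)
      (D : Fin (K - 1) ⊕ ((Fin d ⊕ Unit) × Fin K) → ℝ),
      IsUnit S.det ∧ bnMatrix d K n V v ρ c A = S * Matrix.diagonal D * S⁻¹ := by
  classical
  set T : Finset ℝ := Finset.univ.biUnion fun k => {⟪v k, n⟫, ⟪v k, n⟫ + c k, ⟪v k, n⟫ - c k}
  have hVT : V ∉ T := by
    simp only [T, Finset.mem_biUnion, Finset.mem_univ, true_and, Finset.mem_insert,
      Finset.mem_singleton, not_exists, not_or]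
    exact fun k => ⟨hres₀ k, hresP k, hresM k⟩
  have hscalar : aeval (V • 1 : Matrix (Fin (K - 1)) (Fin (K - 1)) ℝ) (X - C V) = 0 := by
    simp [Algebra.algebraMap_eq_smul_one]
  have hblocks : aeval (blockDiagonal fun k => phasicB d (v k) n (ρ k) (c k))
      (∏ t ∈ T, (X - C t)) = 0 := by
    rw [aeval_blockDiagonal, ← blockDiagonal_zero]
    congr 1
    funext k
    exact aeval_eq_zero_of_dvd_aeval_eq_zero
      (Finset.prod_dvd_prod_of_subset _ _ _ (Finset.subset_biUnion_of_mem _ (Finset.mem_univ k)))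
      (phasicB_aeval_eq_zero d (v k) n (ρ k) (c k) hn (hρ k) (hc k))
  have hM : aeval (bnMatrix d K n V v ρ c A) (∏ t ∈ insert V T, (X - C t)) = 0 := by
    rw [Finset.prod_insert hVT]
    exact aeval_fromBlocks_zero₁₂_mul_eq_zero _ hscalar hblocks
  exact exists_eq_mul_diagonal_mul_inv_of_aeval_prod_X_sub_C_eq_zero _ _ hM

/-- Hyperbolicity: under the non-resonance condition `V ≠ v_k·n` and `V ≠ v_k·n ± c_k`,
the Baer–Nunziato coefficient matrix is diagonalizable over `ℝ`. -/
theorem bnMatrix_diagonalizable (d K : ℕ) (hd : 1 ≤ d) (hK : 1 ≤ K)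
    (n : EuclideanSpace ℝ (Fin d)) (hn : ‖n‖ = 1) (V : ℝ)
    (v : Fin K → EuclideanSpace ℝ (Fin d)) (ρ c : Fin K → ℝ)
    (hρ : ∀ k, ρ k ≠ 0) (hc : ∀ k, c k ≠ 0)
    (A : Fin K → Matrix (Fin d ⊕ Unit) (Fin (K - 1)) ℝ)
    (hres₀ : ∀ k, V ≠ ⟪v k, n⟫)
    (hresP : ∀ k, V ≠ ⟪v k, n⟫ + c k)
    (hresM : ∀ k, V ≠ ⟪v k, n⟫ - c k) :
    ∃ (S : Matrix (Fin (K - 1) ⊕ ((Fin d ⊕ Unit) × Fin K))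
          (Fin (K - 1) ⊕ ((Fin d ⊕ Unit) × Fin K)) ℝ)
      (D : Fin (K - 1) ⊕ ((Fin d ⊕ Unit) × Fin K) → ℝ),
      IsUnit S.det ∧ bnMatrix d K n V v ρ c A = S * Matrix.diagonal D * S⁻¹ :=
  bnMatrix_diagonalizable_general d K n hn V v ρ c hρ hc A hres₀ hresP hresM
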